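/- Let k ≥ 1, let G be a minimally k-edge-connected finite simple graph on V with |V| ≥ 2, and fix a root r ∈ V. Then there exists a family 𝓛 of subsets of V∖{r} such that every member of 𝓛 is a k-cut of G, any two members of 𝓛 are nested or disjoint (𝓛 is laminar), and every edge of G crosses at least one member of 𝓛. -/

import Mathlib

open Finset

variable {V : Type*} [Fintype V] [DecidableEq V]

/-- `Crosses S e`: exactly one endpoint of the edge/link `e` lies in `S`. -/
def Crosses (S : Finset V) (e : Sym2 V) : Prop :=
  ∃ x y : V, e = s(x, y) ∧ x ∈ S ∧ y ∉ S

instance (S : Finset V) : DecidablePred (Crosses S) := fun e =>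
  decidable_of_iff (∃ x y : V, e = s(x, y) ∧ x ∈ S ∧ y ∉ S) Iff.rfl

/-- The cut `δ(S)`: edges of `G` with exactly one endpoint in `S`. -/
def cutEdges (G : SimpleGraph V) [DecidableRel G.Adj] (S : Finset V) :
    Finset (Sym2 V) :=
  G.edgeFinset.filter fun e => Crosses S e

/-- `G` is `k`-edge-connected: every nonempty proper cut has at least `k` crossing edges. -/
def EdgeConnected (G : SimpleGraph V) [DecidableRel G.Adj] (k : ℕ) : Prop :=
  ∀ S : Finset V, S.Nonempty → S ≠ Finset.univ → k ≤ (cutEdges G S).card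

/-- `S` is a `k`-cut: a nonempty proper vertex set with exactly `k` crossing edges. -/
def IsCut (G : SimpleGraph V) [DecidableRel G.Adj] (k : ℕ) (S : Finset V) : Prop :=
  S.Nonempty ∧ S ≠ Finset.univ ∧ (cutEdges G S).card = k

/-- `(S₁, S₂)` are snug shores for `v` (with respect to the root `r`):
two `k`-cuts avoiding `r` with `v ∉ S₁` and `S₂ = S₁ ∪ {v}`. -/
def SnugShores (G : SimpleGraph V) [DecidableRel G.Adj] (k : ℕ) (r v : V)
    (S₁ S₂ : Finset V) : Prop :=
  IsCut G k S₁ ∧ IsCut G k S₂ ∧ r ∉ S₁ ∧ r ∉ S₂ ∧ v ∉ S₁ ∧ S₂ = insert v S₁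

/-- `v` is a snug vertex (with respect to the root `r`). -/
def Snug (G : SimpleGraph V) [DecidableRel G.Adj] (k : ℕ) (r v : V) : Prop :=
  v ≠ r ∧ k + 1 ≤ G.degree v ∧ ∃ S₁ S₂ : Finset V, SnugShores G k r v S₁ S₂

/-- A snug chain: snug vertices `u 0, …, u t` together with `k`-cuts
`S 0, …, S (t+1)` such that `(S i, S (i+1))` are snug shores for `u i`. -/
def IsSnugChain (G : SimpleGraph V) [DecidableRel G.Adj] (k : ℕ) (r : V)
    (t : ℕ) (u : ℕ → V) (S : ℕ → Finset V) : Prop :=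
  ∀ i ≤ t, Snug G k r (u i) ∧ SnugShores G k r (u i) (S i) (S (i + 1))

/-! Uncrossing. If two `k`-cuts `A`, `B` avoiding `r` cross, then every edge crossing `A ∩ B` or
`A ∪ B` crosses `A` or `B`, and every edge crossing both crosses both `A` and `B`; so
`|δ(A ∩ B)| + |δ(A ∪ B)| ≤ |δ(A)| + |δ(B)| = 2k`, and `k`-edge-connectivity makes `A ∩ B` and
`A ∪ B` again `k`-cuts avoiding `r`, whose cuts together are exactly `δ(A) ∪ δ(B)`.
Replacing `A`, `B` by `A ∩ B`, `A ∪ B` in a family of such cuts covering all edges therefore keeps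
it covering, while it strictly decreases `∑ (|V|² - |A|²)`: the sizes
`|A ∩ B| < |A|, |B| < |A ∪ B|` have the same sum, so their squares grow. A covering family
minimising this potential is laminar; covering families exist, since of a `k`-cut through an edge
and its complement one avoids `r`. -/

omit [Fintype V] [DecidableEq V] in
theorem crosses_mk_iff {S : Finset V} {x y : V} :
    Crosses S s(x, y) ↔ (x ∈ S ∧ y ∉ S) ∨ (y ∈ S ∧ x ∉ S) := by
  constructor
  · rintro ⟨a, b, hab, ha, hb⟩
    rcases Sym2.eq_iff.1 hab with ⟨rfl, rfl⟩ | ⟨rfl, rfl⟩ <;> tauto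
  · rintro (⟨hx, hy⟩ | ⟨hy, hx⟩)
    · exact ⟨x, y, rfl, hx, hy⟩
    · exact ⟨y, x, Sym2.eq_swap, hy, hx⟩

theorem crosses_compl {S : Finset V} {e : Sym2 V} : Crosses Sᶜ e ↔ Crosses S e := by
  induction e using Sym2.ind with
  | _ x y => simp only [crosses_mk_iff, mem_compl]; tauto

section Cuts

variable {G : SimpleGraph V} [DecidableRel G.Adj] {k : ℕ}

theorem mem_cutEdges {S : Finset V} {e : Sym2 V} :
    e ∈ cutEdges G S ↔ e ∈ G.edgeSet ∧ Crosses S e := by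
  rw [cutEdges, mem_filter, SimpleGraph.mem_edgeFinset]

theorem IsCut.compl {S : Finset V} (h : IsCut G k S) : IsCut G k Sᶜ := by
  obtain ⟨hne, hnu, hcard⟩ := h
  refine ⟨?_, ?_, ?_⟩
  · rwa [nonempty_iff_ne_empty, Ne, compl_eq_empty_iff]
  · rwa [Ne, compl_eq_univ_iff, ← not_nonempty_iff_eq_empty, not_not]
  · rwa [cutEdges, filter_congr fun e _ => crosses_compl]

theorem cutEdges_inter_union_subset (A B : Finset V) :
    cutEdges G (A ∩ B) ∪ cutEdges G (A ∪ B) ⊆ cutEdges G A ∪ cutEdges G B := by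
  intro e
  induction e using Sym2.ind with
  | _ x y =>
    simp only [mem_union, mem_cutEdges, crosses_mk_iff, mem_inter]
    tauto

theorem cutEdges_inter_inter_union_subset (A B : Finset V) :
    cutEdges G (A ∩ B) ∩ cutEdges G (A ∪ B) ⊆ cutEdges G A ∩ cutEdges G B := by
  intro e
  induction e using Sym2.ind with
  | _ x y =>
    simp only [mem_union, mem_cutEdges, crosses_mk_iff, mem_inter]
    tauto

theorem IsCut.inter_union (hG : EdgeConnected G k) {A B : Finset V}
    (hA : IsCut G k A) (hB : IsCut G k B) (hI : (A ∩ B).Nonempty) (hU : A ∪ B ≠ univ) :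
    IsCut G k (A ∩ B) ∧ IsCut G k (A ∪ B) ∧
      cutEdges G (A ∩ B) ∪ cutEdges G (A ∪ B) = cutEdges G A ∪ cutEdges G B := by
  have hIu : A ∩ B ≠ univ := fun h => hA.2.1 (univ_subset_iff.1 (h ▸ inter_subset_left))
  have hkI := hG _ hI hIu
  have hkU := hG _ (hA.1.mono subset_union_left) hU
  have hunion := card_le_card (cutEdges_inter_union_subset (G := G) A B)
  have hinter := card_le_card (cutEdges_inter_inter_union_subset (G := G) A B)
  have hnew := card_union_add_card_inter (cutEdges G (A ∩ B)) (cutEdges G (A ∪ B))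
  have hold := card_union_add_card_inter (cutEdges G A) (cutEdges G B)
  rw [hA.2.2, hB.2.2] at hold
  refine ⟨⟨hI, hIu, by omega⟩, ⟨hA.1.mono subset_union_left, hU, by omega⟩, ?_⟩
  exact eq_of_subset_of_card_le (cutEdges_inter_union_subset A B) (by omega)

end Cuts

theorem Finset.card_sq_add_card_sq_lt {α : Type*} [DecidableEq α] {A B : Finset α}
    (hAB : ¬A ⊆ B) (hBA : ¬B ⊆ A) :
    #A ^ 2 + #B ^ 2 < #(A ∩ B) ^ 2 + #(A ∪ B) ^ 2 := by
  have hI : #(A ∩ B) < #A := card_lt_card (inf_lt_left.2 hAB)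
  have hU : #A < #(A ∪ B) := card_lt_card (left_lt_sup.2 hBA)
  have hsum := card_union_add_card_inter A B
  nlinarith

def familyPotential (L : Finset (Finset V)) : ℕ :=
  ∑ A ∈ L, (Fintype.card V ^ 2 - #A ^ 2)

theorem familyPotential_uncross_lt {L : Finset (Finset V)} {A B : Finset V} (hA : A ∈ L)
    (hB : B ∈ L) (hAB : ¬A ⊆ B) (hBA : ¬B ⊆ A) :
    familyPotential ({A ∩ B, A ∪ B} ∪ L \ {A, B}) < familyPotential L := by
  set f : Finset V → ℕ := fun S => Fintype.card V ^ 2 - #S ^ 2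
  have hcard_sq_le : ∀ S : Finset V, #S ^ 2 ≤ Fintype.card V ^ 2 := fun S => by
    gcongr; exact card_le_univ S
  have hne : A ≠ B := fun h => hAB (h ▸ Subset.rfl)
  have hIU : A ∩ B ≠ A ∪ B := fun h =>
    hBA (subset_union_right.trans (h.symm.subset.trans inter_subset_left))
  have hold : familyPotential L = f A + f B + ∑ S ∈ L \ {A, B}, f S := by
    rw [familyPotential, ← sum_sdiff (insert_subset hA (singleton_subset_iff.2 hB)),
      sum_pair hne, add_comm]
  have hnew : familyPotential ({A ∩ B, A ∪ B} ∪ L \ {A, B}) ≤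
      f (A ∩ B) + f (A ∪ B) + ∑ S ∈ L \ {A, B}, f S := by
    rw [← sum_pair hIU, familyPotential, ← sum_union_inter]
    exact Nat.le_add_right _ _
  have hsq := card_sq_add_card_sq_lt hAB hBA
  have := hcard_sq_le A; have := hcard_sq_le B
  have := hcard_sq_le (A ∩ B); have := hcard_sq_le (A ∪ B)
  simp only [f] at hold hnew
  omega

section Cover

variable (G : SimpleGraph V) [DecidableRel G.Adj] (k : ℕ) (r : V)

def IsRootedCutCover (L : Finset (Finset V)) : Prop :=
  (∀ A ∈ L, IsCut G k A ∧ r ∉ A) ∧ ∀ e ∈ G.edgeSet, ∃ A ∈ L, Crosses A e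

theorem exists_isRootedCutCover
    (hmin : ∀ e ∈ G.edgeSet, ∃ S : Finset V, IsCut G k S ∧ Crosses S e) :
    ∃ L, IsRootedCutCover G k r L := by
  classical
  refine ⟨univ.filter fun A => IsCut G k A ∧ r ∉ A, fun A hA => (mem_filter.1 hA).2, ?_⟩
  intro e he
  obtain ⟨S, hS, heS⟩ := hmin e he
  by_cases hr : r ∈ S
  · exact ⟨Sᶜ, by simp [hS.compl, hr], crosses_compl.2 heS⟩
  · exact ⟨S, by simp [hS, hr], heS⟩

variable {G k r}

theorem IsRootedCutCover.uncross (hG : EdgeConnected G k) {L : Finset (Finset V)}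
    (hL : IsRootedCutCover G k r L) {A B : Finset V} (hA : A ∈ L) (hB : B ∈ L)
    (hI : (A ∩ B).Nonempty) :
    IsRootedCutCover G k r ({A ∩ B, A ∪ B} ∪ L \ {A, B}) := by
  obtain ⟨hAcut, hrA⟩ := hL.1 A hA
  obtain ⟨hBcut, hrB⟩ := hL.1 B hB
  have hU : A ∪ B ≠ univ := fun h => hrA ((mem_union.1 (h ▸ mem_univ r)).resolve_right hrB)
  obtain ⟨hIcut, hUcut, hδ⟩ := hAcut.inter_union hG hBcut hI hU
  refine ⟨fun C hC => ?_, fun e he => ?_⟩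
  · simp only [mem_union, mem_insert, mem_singleton, mem_sdiff] at hC
    rcases hC with (rfl | rfl) | ⟨hC, -⟩
    · exact ⟨hIcut, fun h => hrA (mem_inter.1 h).1⟩
    · exact ⟨hUcut, by simp [hrA, hrB]⟩
    · exact hL.1 C hC
  obtain ⟨C, hC, heC⟩ := hL.2 e he
  by_cases hCAB : C ∈ ({A, B} : Finset (Finset V))
  · have heAB : e ∈ cutEdges G A ∪ cutEdges G B := by
      simp only [mem_insert, mem_singleton] at hCAB
      rcases hCAB with rfl | rfl <;> simp [mem_cutEdges, he, heC]
    rw [← hδ, mem_union] at heAB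
    rcases heAB with h | h
    · exact ⟨A ∩ B, by simp, (mem_cutEdges.1 h).2⟩
    · exact ⟨A ∪ B, by simp, (mem_cutEdges.1 h).2⟩
  · exact ⟨C, mem_union_right _ (mem_sdiff.2 ⟨hC, hCAB⟩), heC⟩

end Cover

theorem exists_laminar_family_general
    (k : ℕ)
    (G : SimpleGraph V) [DecidableRel G.Adj] (hG : EdgeConnected G k)
    (hmin : ∀ e ∈ G.edgeSet, ∃ S : Finset V, IsCut G k S ∧ Crosses S e)
    (r : V) :
    ∃ L : Finset (Finset V),
      (∀ A ∈ L, IsCut G k A ∧ r ∉ A) ∧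
      (∀ A ∈ L, ∀ B ∈ L, A ⊆ B ∨ B ⊆ A ∨ A ∩ B = ∅) ∧
      (∀ e ∈ G.edgeSet, ∃ A ∈ L, Crosses A e) := by
  classical
  obtain ⟨L₀, hL₀⟩ := exists_isRootedCutCover G k r hmin
  obtain ⟨L, hL, hLmin⟩ := (univ.filter (IsRootedCutCover G k r)).exists_min_image
    familyPotential ⟨L₀, mem_filter.2 ⟨mem_univ _, hL₀⟩⟩
  have hLcover := (mem_filter.1 hL).2
  refine ⟨L, hLcover.1, fun A hA B hB => ?_, hLcover.2⟩
  by_contra! hcross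
  obtain ⟨hAB, hBA, hI⟩ := hcross
  have hL' := hLcover.uncross hG hA hB hI
  exact (hLmin _ (mem_filter.2 ⟨mem_univ _, hL'⟩)).not_gt
    (familyPotential_uncross_lt hA hB hAB hBA)

/-- In a minimally `k`-edge-connected graph there is a laminar family of
`k`-cuts avoiding the root `r` such that every edge crosses some member. -/
theorem exists_laminar_family
    (k : ℕ) (hk : 1 ≤ k) (hV : 2 ≤ Fintype.card V)
    (G : SimpleGraph V) [DecidableRel G.Adj] (hG : EdgeConnected G k)
    (hmin : ∀ e ∈ G.edgeSet, ∃ S : Finset V, IsCut G k S ∧ Crosses S e)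
    (r : V) :
    ∃ L : Finset (Finset V),
      (∀ A ∈ L, IsCut G k A ∧ r ∉ A) ∧
      (∀ A ∈ L, ∀ B ∈ L, A ⊆ B ∨ B ⊆ A ∨ A ∩ B = ∅) ∧
      (∀ e ∈ G.edgeSet, ∃ A ∈ L, Crosses A e) :=
  exists_laminar_family_general k G hG hmin r
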